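/- Let A₁ = [[1,2],[1,0]], A₂ = [[1/3,4/3],[2/3,−1/3]], G = [[1,2],[−1,−2]] be 2×2 real matrices, and v = (1,−1) ∈ ℝ². Then: (i) A₁v = A₂v = −v; (ii) G·Gᵀ = 5·v·vᵀ; (iii) the curve m(t) = e^{−t}v satisfies m'(t) = A₁m(t) and m'(t) = A₂m(t) for all t ≥ 0 with m(0) = v; and (iv) the matrix curve Σ(t) = (5/2)(1−e^{−2t})·v·vᵀ satisfies Σ(0) = 0 and, for all t ≥ 0 and both i = 1,2, Σ'(t) = A_iΣ(t) + Σ(t)A_iᵀ + GGᵀ. Consequently the Gaussian marginals N(m(t),Σ(t)) of the two linear SDEs dXₜ = A_iXₜdt + GdWₜ started at X₀ = v coincide for all t. -/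

import Mathlib

/-!
Both drifts have `v` as an eigenvector with eigenvalue `-1`, and `G = v wᵀ` with `w = (1, 2)` has
rank one, so `GGᵀ = ‖w‖² vvᵀ`. On curves of the form `g(t) v` and `f(t) vvᵀ` every drift `A` with
`Av = cv` therefore acts as multiplication by `c` (resp. `2c`, since `A vvᵀ + vvᵀ Aᵀ = 2c vvᵀ`), and
the mean and Lyapunov equations collapse to the scalar ODEs `g' = c g` and `f' = 2c f + q`, which
see only the eigenvalue `c = -1` and not the drift itself.
-/

open Matrix

section EigenvectorSolutions

variable {𝕜 n : Type*} [NontriviallyNormedField 𝕜] [Fintype n]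
  {A : Matrix n n 𝕜} {v : n → 𝕜} {c : 𝕜}

theorem mul_vecMulVec_add_vecMulVec_mul_transpose (hAv : A *ᵥ v = c • v) :
    A * vecMulVec v v + vecMulVec v v * Aᵀ = (2 * c) • vecMulVec v v := by
  rw [mul_vecMulVec, vecMulVec_mul, vecMul_transpose, hAv, smul_vecMulVec, vecMulVec_smul,
    two_mul, add_smul]

theorem vecMulVec_mul_transpose_self (u w : n → 𝕜) :
    vecMulVec u w * (vecMulVec u w)ᵀ = (w ⬝ᵥ w) • vecMulVec u u := by
  rw [transpose_vecMulVec, vecMulVec_mul_vecMulVec, vecMulVec_smul]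

theorem hasDerivAt_smul_of_mulVec_eq_smul (hAv : A *ᵥ v = c • v) {g : 𝕜 → 𝕜} {t : 𝕜}
    (hg : HasDerivAt g (c * g t) t) :
    HasDerivAt (fun s => g s • v) (A *ᵥ (g t • v)) t := by
  rw [mulVec_smul, hAv, smul_smul, mul_comm]
  exact hg.smul_const v

theorem hasDerivAt_smul_vecMulVec_apply_of_mulVec_eq_smul (hAv : A *ᵥ v = c • v)
    {f : 𝕜 → 𝕜} {t q : 𝕜} (hf : HasDerivAt f (2 * c * f t + q) t) (i j : n) :
    HasDerivAt (fun s => (f s • vecMulVec v v) i j)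
      ((A * (f t • vecMulVec v v) + (f t • vecMulVec v v) * Aᵀ + q • vecMulVec v v) i j) t := by
  have hlyap : A * (f t • vecMulVec v v) + (f t • vecMulVec v v) * Aᵀ + q • vecMulVec v v
      = (2 * c * f t + q) • vecMulVec v v := by
    rw [Matrix.mul_smul, Matrix.smul_mul, ← smul_add, mul_vecMulVec_add_vecMulVec_mul_transpose hAv,
      smul_smul, ← add_smul, mul_comm (f t)]
  simp only [hlyap, Matrix.smul_apply, smul_eq_mul]
  exact hf.mul_const _

end EigenvectorSolutions

theorem hasDerivAt_exp_neg (t : ℝ) :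
    HasDerivAt (fun s => Real.exp (-s)) (-1 * Real.exp (-t)) t := by
  simpa using (hasDerivAt_neg t).exp

/-- The scalar Lyapunov equation `f' = 2cf + q` for `c = -1`. -/
theorem hasDerivAt_one_sub_exp_neg_two_mul (q t : ℝ) :
    HasDerivAt (fun s => q / 2 * (1 - Real.exp (-2 * s)))
      (2 * -1 * (q / 2 * (1 - Real.exp (-2 * t))) + q) t := by
  refine ((((hasDerivAt_id' t).const_mul (-2)).exp.const_sub 1).const_mul (q / 2)).congr_deriv ?_
  ring

/-- The degenerate-rank example: the two linear SDEs `dXₜ = AᵢXₜdt + GdWₜ`, `i = 1,2`, started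
at `X₀ = v = (1,−1)`, have the same Gaussian marginals `N(m(t),Σ(t))`: (i) `A₁v = A₂v = −v`;
(ii) `GGᵀ = 5·vvᵀ`; (iii) the mean `m(t) = e^{−t}v` solves `m' = Aᵢm`, `m(0) = v`, for both
`i`; (iv) the covariance `Σ(t) = (5/2)(1−e^{−2t})·vvᵀ` satisfies `Σ(0) = 0` and the Lyapunov
ODE `Σ' = AᵢΣ + ΣAᵢᵀ + GGᵀ` (entrywise) for both `i`. -/
theorem degenerate_rank_non_identifiable
    (A₁ A₂ G : Matrix (Fin 2) (Fin 2) ℝ) (v : Fin 2 → ℝ)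
    (hA₁ : A₁ = !![1, 2; 1, 0]) (hA₂ : A₂ = !![1/3, 4/3; 2/3, -1/3])
    (hG : G = !![1, 2; -1, -2]) (hv : v = ![1, -1])
    (m : ℝ → Fin 2 → ℝ) (hm : m = fun t => Real.exp (-t) • v)
    (S : ℝ → Matrix (Fin 2) (Fin 2) ℝ)
    (hS : S = fun t => ((5 / 2) * (1 - Real.exp (-2 * t))) • Matrix.vecMulVec v v) :
    (A₁.mulVec v = -v ∧ A₂.mulVec v = -v)
    ∧ G * Gᵀ = (5 : ℝ) • Matrix.vecMulVec v v
    ∧ (m 0 = v ∧ ∀ t : ℝ, 0 ≤ t →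
        HasDerivAt m (A₁.mulVec (m t)) t ∧ HasDerivAt m (A₂.mulVec (m t)) t)
    ∧ (S 0 = 0 ∧ ∀ t : ℝ, 0 ≤ t → ∀ i j : Fin 2,
        HasDerivAt (fun s => S s i j) ((A₁ * S t + S t * A₁ᵀ + G * Gᵀ) i j) t
        ∧ HasDerivAt (fun s => S s i j) ((A₂ * S t + S t * A₂ᵀ + G * Gᵀ) i j) t) := by
  have hA₁v : A₁ *ᵥ v = (-1 : ℝ) • v := by
    subst hA₁ hv; ext i; fin_cases i <;> norm_num [mulVec, dotProduct, Fin.sum_univ_two]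
  have hA₂v : A₂ *ᵥ v = (-1 : ℝ) • v := by
    subst hA₂ hv; ext i; fin_cases i <;> norm_num [mulVec, dotProduct, Fin.sum_univ_two]
  have hGG : G * Gᵀ = (5 : ℝ) • vecMulVec v v := by
    have hG_rankOne : G = vecMulVec v ![1, 2] := by
      subst hG hv; ext i j; fin_cases i <;> fin_cases j <;> simp
    rw [hG_rankOne, vecMulVec_mul_transpose_self]
    norm_num [dotProduct, Fin.sum_univ_two]
  have hmean : ∀ A : Matrix (Fin 2) (Fin 2) ℝ, A *ᵥ v = (-1 : ℝ) • v →
      ∀ t, HasDerivAt m (A *ᵥ m t) t := fun A hAv t => by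
    subst hm; exact hasDerivAt_smul_of_mulVec_eq_smul hAv (hasDerivAt_exp_neg t)
  have hcov : ∀ A : Matrix (Fin 2) (Fin 2) ℝ, A *ᵥ v = (-1 : ℝ) • v → ∀ t i j,
      HasDerivAt (fun s => S s i j) ((A * S t + S t * Aᵀ + G * Gᵀ) i j) t := fun A hAv t i j => by
    subst hS; rw [hGG]
    exact hasDerivAt_smul_vecMulVec_apply_of_mulVec_eq_smul hAv
      (hasDerivAt_one_sub_exp_neg_two_mul 5 t) i j
  refine ⟨⟨by simpa using hA₁v, by simpa using hA₂v⟩, hGG, ⟨by simp [hm], ?_⟩, ⟨by simp [hS], ?_⟩⟩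
  · exact fun t _ => ⟨hmean A₁ hA₁v t, hmean A₂ hA₂v t⟩
  · exact fun t _ i j => ⟨hcov A₁ hA₁v t i j, hcov A₂ hA₂v t i j⟩
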